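/- Fix an integer n ≥ 2. Let R_univ = ℂ[x_{ij} : 1 ≤ i ≤ n, 1 ≤ j ≤ n−1][a], a polynomial ring over ℂ in the n(n−1) variables x_{ij} and one further variable a. Let d_2 be the n × (n−1) matrix with entries x_{ij}, and let d_1 be the 1 × n row vector whose j-th entry is (−1)^{j+1} · a · det(d_2 with its j-th row deleted). Then: (1) d_1 d_2 = 0, so F^univ : 0 → R_univ^{n−1} → R_univ^n → R_univ with differentials d_2 and d_1 is a complex; and (2) for every commutative ℂ-algebra R and every acyclic complex G : 0 → R^{n−1} → R^n → R of finite free R-modules (i.e., exact at R^{n−1} and at R^n), there exists a unique ℂ-algebra homomorphism φ : R_univ → R specializing F^univ to G. -/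
import Mathlib


/-!
STATEMENT 1: Universal-pair form of the Hilbert–Burch theorem for the format (1, n, n−1).
-/

open Matrix

/-- The map `Fin (n-1) → Fin n` skipping the row `j` (deletion of the `j`-th row). -/
def delRow {n : ℕ} (j : Fin n) (i : Fin (n - 1)) : Fin n :=
  if h : (i : ℕ) < (j : ℕ) then ⟨i, lt_trans h j.2⟩
  else ⟨(i : ℕ) + 1, by have := i.2; have := j.2; omega⟩

/-- The universal ring for the format `(1, n, n-1)`: a polynomial ring over `ℂ` in the
`n(n-1)` variables `x_{ij}` and one further variable `a`. -/
noncomputable abbrev HBUnivRing (n : ℕ) : Type :=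
  MvPolynomial ((Fin n × Fin (n - 1)) ⊕ Unit) ℂ

/-- The generic `n × (n-1)` matrix of variables. -/
noncomputable def HBd2 (n : ℕ) : Matrix (Fin n) (Fin (n - 1)) (HBUnivRing n) :=
  fun i j => MvPolynomial.X (Sum.inl (i, j))

/-- The row vector whose `j`-th entry is `(-1)^(j+1) · a ·` (the maximal minor of the
generic matrix obtained by deleting its `j`-th row). -/
noncomputable def HBd1 (n : ℕ) : Matrix (Fin 1) (Fin n) (HBUnivRing n) :=
  fun _ j => (-1 : HBUnivRing n) ^ ((j : ℕ) + 1) *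
    MvPolynomial.X (Sum.inr ()) * ((HBd2 n).submatrix (delRow j) id).det


namespace HBaux


variable {m : ℕ} {R : Type*} [CommRing R]

def mnr (g2 : Matrix (Fin (m+1)) (Fin m) R) {k : ℕ}
    (r : Fin k → Fin (m+1)) (c : Fin k → Fin m) : R :=
  (g2.submatrix r c).det

def delta (g2 : Matrix (Fin (m+1)) (Fin m) R) (j : Fin (m+1)) : R :=
  (-1)^(j:ℕ) * mnr g2 j.succAbove id

def vecRC (g2 : Matrix (Fin (m+1)) (Fin m) R) {k : ℕ}
    (r : Fin k → Fin (m+1)) (c : Fin (k+1) → Fin m) : Fin m → R :=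
  fun l => ∑ q : Fin (k+1), if c q = l then (-1)^(q:ℕ) * mnr g2 r (c ∘ q.succAbove) else 0

lemma mulVec_vecRC (g2 : Matrix (Fin (m+1)) (Fin m) R) {k : ℕ}
    (r : Fin k → Fin (m+1)) (c : Fin (k+1) → Fin m) :
    g2.mulVec (vecRC g2 r c) = fun i => mnr g2 (Fin.cons i r) c := by
  funext i
  have hcs : (Fin.cons i r) ∘ Fin.succ = r := by funext p; simp
  have hdet := Matrix.det_succ_row_zero (g2.submatrix (Fin.cons i r) c)
  have h1 : ∀ q : Fin (k+1),
      ((g2.submatrix (Fin.cons i r) c).submatrix Fin.succ q.succAbove).det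
        = mnr g2 r (c ∘ q.succAbove) := by
    intro q
    rw [Matrix.submatrix_submatrix, hcs]
    rfl
  have h2 : ∀ q : Fin (k+1), (g2.submatrix (Fin.cons i r) c) 0 q = g2 i (c q) := by
    intro q; simp
  show g2.mulVec (vecRC g2 r c) i = (g2.submatrix (Fin.cons i r) c).det
  rw [hdet, Matrix.mulVec]
  show (fun j => g2 i j) ⬝ᵥ vecRC g2 r c = _
  rw [dotProduct]
  unfold vecRC
  rw [Finset.sum_congr rfl (fun l _ => Finset.mul_sum Finset.univ _ (g2 i l)), Finset.sum_comm]
  refine Finset.sum_congr rfl (fun q _ => ?_)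
  rw [Finset.sum_congr rfl (fun l _ => (mul_ite _ _ _ _))]
  simp only [mul_zero]
  rw [Finset.sum_ite_eq Finset.univ (c q) (fun l => g2 i l * ((-1)^(q:ℕ) * mnr g2 r (c ∘ q.succAbove)))]
  rw [h1 q, h2 q]
  simp only [Finset.mem_univ, if_true]
  ring

/-- Laplace: the signed maximal minors annihilate the columns of `g2`. -/
lemma delta_g2 (g2 : Matrix (Fin (m+1)) (Fin m) R) (l : Fin m) :
    ∑ j : Fin (m+1), delta g2 j * g2 j l = 0 := by
  classical
  set N : Matrix (Fin (m+1)) (Fin (m+1)) R := g2.submatrix id (Fin.cons l id) with hN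
  have hdet0 : N.det = 0 := by
    rw [← Matrix.det_transpose]
    refine Matrix.det_zero_of_row_eq (i := 0) (j := l.succ) (Fin.succ_ne_zero l).symm ?_
    funext p
    simp [hN, Matrix.transpose_apply]
  have hexp := Matrix.det_succ_column_zero N
  rw [hdet0] at hexp
  have : ∀ j : Fin (m+1), (N.submatrix j.succAbove Fin.succ).det = mnr g2 j.succAbove id := by
    intro j
    rw [hN, Matrix.submatrix_submatrix]
    have : (Fin.cons l id : Fin (m+1) → Fin m) ∘ Fin.succ = id := by funext p; simp
    rw [this]
    rfl
  have hNj0 : ∀ j : Fin (m+1), N j 0 = g2 j l := by intro j; simp [hN]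
  calc ∑ j : Fin (m+1), delta g2 j * g2 j l
      = ∑ j : Fin (m+1), (-1)^(j:ℕ) * N j 0 * (N.submatrix j.succAbove Fin.succ).det := by
        refine Finset.sum_congr rfl (fun j _ => ?_)
        rw [this j, hNj0 j, delta]; ring
    _ = 0 := hexp.symm

/-- the delta row vector kills the image of `g2`. -/
lemma delta_dot_mulVec (g2 : Matrix (Fin (m+1)) (Fin m) R) (w : Fin m → R) :
    ∑ j : Fin (m+1), delta g2 j * (g2.mulVec w) j = 0 := by
  have : ∀ j, (g2.mulVec w) j = ∑ l, g2 j l * w l := fun j => rfl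
  calc ∑ j : Fin (m+1), delta g2 j * (g2.mulVec w) j
      = ∑ j : Fin (m+1), ∑ l, delta g2 j * g2 j l * w l := by
        refine Finset.sum_congr rfl (fun j _ => ?_)
        rw [this j, Finset.mul_sum]
        exact Finset.sum_congr rfl (fun l _ => by ring)
    _ = ∑ l, (∑ j : Fin (m+1), delta g2 j * g2 j l) * w l := by
        rw [Finset.sum_comm]
        exact Finset.sum_congr rfl (fun l _ => by rw [Finset.sum_mul])
    _ = 0 := by simp [delta_g2]

lemma mnr_zero_of_not_inj_row (g2 : Matrix (Fin (m+1)) (Fin m) R) {k : ℕ}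
    {r : Fin k → Fin (m+1)} {c : Fin k → Fin m} (h : ¬ Function.Injective r) :
    mnr g2 r c = 0 := by
  simp only [Function.Injective, not_forall] at h
  obtain ⟨p, q, hpq, hne⟩ := h
  exact Matrix.det_zero_of_row_eq hne (by funext l; simp [Matrix.submatrix_apply, hpq])

lemma mnr_zero_of_not_inj_col (g2 : Matrix (Fin (m+1)) (Fin m) R) {k : ℕ}
    {r : Fin k → Fin (m+1)} {c : Fin k → Fin m} (h : ¬ Function.Injective c) :
    mnr g2 r c = 0 := by
  simp only [Function.Injective, not_forall] at h
  obtain ⟨p, q, hpq, hne⟩ := h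
  rw [mnr, ← Matrix.det_transpose]
  exact Matrix.det_zero_of_row_eq hne (by funext l; simp [Matrix.transpose_apply, hpq])

/-- every top-size minor is `0` or `±1` times a `delete-row-j` minor. -/
lemma mnr_top_structure (g2 : Matrix (Fin (m+1)) (Fin m) R)
    (r : Fin m → Fin (m+1)) (c : Fin m → Fin m) :
    mnr g2 r c = 0 ∨ ∃ (j : Fin (m+1)) (e : R), (e = 1 ∨ e = -1) ∧
      mnr g2 r c = e * mnr g2 j.succAbove id := by
  classical
  by_cases hr : Function.Injective r
  · by_cases hc : Function.Injective c
    · right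
      -- find the missing row index j
      have hcard : (Finset.univ.image r).card = m := by
        rw [Finset.card_image_of_injective _ hr, Finset.card_univ, Fintype.card_fin]
      have : (Finset.univ.image r) ≠ Finset.univ := by
        intro h
        have := h ▸ hcard
        rw [Finset.card_univ, Fintype.card_fin] at this
        omega
      obtain ⟨j, hj⟩ : ∃ j : Fin (m+1), j ∉ Finset.univ.image r := by
        by_contra h
        push_neg at h
        exact this (Finset.eq_univ_iff_forall.mpr h)
      have hrj : ∀ p, r p ≠ j := by
        intro p hp
        exact hj (Finset.mem_image.mpr ⟨p, Finset.mem_univ _, hp⟩)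
      -- build the permutation σ with succAbove j ∘ σ = r
      have hex : ∀ p, ∃ z, j.succAbove z = r p := fun p => Fin.exists_succAbove_eq (hrj p)
      choose σ hσ using hex
      have hσinj : Function.Injective σ := by
        intro p q h
        apply hr
        rw [← hσ p, ← hσ q, h]
      have hσbij : Function.Bijective σ := (Finite.injective_iff_bijective).mp hσinj
      have hcbij : Function.Bijective c := (Finite.injective_iff_bijective).mp hc
      let eσ : Equiv.Perm (Fin m) := Equiv.ofBijective σ hσbij
      let eτ : Equiv.Perm (Fin m) := Equiv.ofBijective c hcbij
      refine ⟨j, ((Equiv.Perm.sign eσ : ℤ) * (Equiv.Perm.sign eτ : ℤ) : ℤ), ?_, ?_⟩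
      · rcases Int.units_eq_one_or (Equiv.Perm.sign eσ) with h1 | h1 <;>
          rcases Int.units_eq_one_or (Equiv.Perm.sign eτ) with h2 | h2 <;>
          simp [h1, h2]
      · have h1 : (j.succAbove ∘ id ∘ (eσ : Fin m → Fin m)) = r := by
          funext p
          simp only [Function.comp_apply, id_eq, Equiv.ofBijective_apply, eσ]
          exact hσ p
        have h2 : (id ∘ (eτ : Fin m → Fin m) ∘ id) = c := by
          funext q
          simp [eτ]
        have hsub : g2.submatrix r c
            = ((g2.submatrix j.succAbove id).submatrix id eτ).submatrix eσ id := by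
          rw [Matrix.submatrix_submatrix, Matrix.submatrix_submatrix, h1, h2]
        rw [mnr, hsub, Matrix.det_permute eσ]
        have : ((g2.submatrix j.succAbove id).submatrix id eτ).det
            = (Equiv.Perm.sign eτ : ℤ) * (g2.submatrix j.succAbove id).det := by
          rw [← Matrix.det_transpose, Matrix.transpose_submatrix, Matrix.det_permute eτ,
            Matrix.det_transpose]
        rw [this, mnr]
        push_cast
        ring
    · exact Or.inl (mnr_zero_of_not_inj_col g2 hc)
  · exact Or.inl (mnr_zero_of_not_inj_row g2 hr)


section Main
variable (g2 : Matrix (Fin (m+1)) (Fin m) R) (g1 : Matrix (Fin 1) (Fin (m+1)) R)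

lemma vecRC_eval_new {k : ℕ} (r : Fin k → Fin (m+1)) (c : Fin k → Fin m)
    (cs : Fin m) (hcs : ∀ p, c p ≠ cs) :
    vecRC g2 r (Fin.cons cs c) cs = mnr g2 r c := by
  unfold vecRC
  rw [Fin.sum_univ_succ]
  have h0 : (Fin.cons cs c : Fin (k+1) → Fin m) 0 = cs := rfl
  have h1 : ((Fin.cons cs c : Fin (k+1) → Fin m) ∘ (0 : Fin (k+1)).succAbove) = c := by
    funext p
    simp [Fin.succAbove_zero]
  rw [h0, h1]
  simp only [if_pos rfl, Fin.val_zero, pow_zero, one_mul]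
  have hrest : ∀ q : Fin k,
      (if (Fin.cons cs c : Fin (k+1) → Fin m) q.succ = cs then
        (-1:R)^((q.succ : Fin (k+1)):ℕ) * mnr g2 r ((Fin.cons cs c : Fin (k+1) → Fin m) ∘ (q.succ).succAbove) else 0) = 0 := by
    intro q
    rw [if_neg]
    show ¬ (Fin.cons cs c : Fin (k+1) → Fin m) q.succ = cs
    rw [Fin.cons_succ]
    exact hcs q
  rw [Finset.sum_congr rfl (fun q _ => hrest q)]
  simp

lemma mccoy (hinj : Function.Injective g2.mulVec)
    (x : R) (h : ∀ j : Fin (m+1), x * mnr g2 j.succAbove id = 0) : x = 0 := by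
  have main : ∀ d k, k + d = m → ∀ (r : Fin k → Fin (m+1)) (c : Fin k → Fin m),
      x * mnr g2 r c = 0 := by
    intro d
    induction d with
    | zero =>
      intro k hk r c
      obtain rfl : k = m := by omega
      rcases mnr_top_structure g2 r c with h0 | ⟨j, e, _, heq⟩
      · rw [h0, mul_zero]
      · rw [heq, show x * (e * mnr g2 j.succAbove id) = e * (x * mnr g2 j.succAbove id) by ring,
          h j, mul_zero]
    | succ d ih =>
      intro k hk r c
      obtain ⟨cs, hcs⟩ : ∃ cs : Fin m, ∀ p, c p ≠ cs := by
        by_contra hcon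
        push_neg at hcon
        have hsurj : Function.Surjective c := fun b => by
          obtain ⟨p, hp⟩ := hcon b; exact ⟨p, hp⟩
        have := Fintype.card_le_of_surjective c hsurj
        simp [Fintype.card_fin] at this
        omega
      have hmv : g2.mulVec (x • vecRC g2 r (Fin.cons cs c)) = 0 := by
        rw [Matrix.mulVec_smul, mulVec_vecRC]
        funext i
        show x • mnr g2 (Fin.cons i r) (Fin.cons cs c) = 0
        rw [smul_eq_mul]
        exact ih (k+1) (by omega) (Fin.cons i r) (Fin.cons cs c)
      have hz : x • vecRC g2 r (Fin.cons cs c) = 0 := by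
        apply hinj
        rw [hmv, Matrix.mulVec_zero]
      have := congrFun hz cs
      rw [Pi.smul_apply, Pi.zero_apply, smul_eq_mul, vecRC_eval_new g2 r c cs hcs] at this
      exact this
  have := main m 0 (by omega) Fin.elim0 Fin.elim0
  rw [mnr, Matrix.det_fin_zero, mul_one] at this
  exact this

lemma mccoy_delta (hinj : Function.Injective g2.mulVec)
    (x : R) (h : ∀ j : Fin (m+1), x * delta g2 j = 0) : x = 0 := by
  apply mccoy g2 hinj
  intro j
  have := h j
  rw [delta] at this
  have h2 : (-1:R)^(j:ℕ) * (x * ((-1)^(j:ℕ) * mnr g2 j.succAbove id)) = 0 := by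
    rw [this, mul_zero]
  calc x * mnr g2 j.succAbove id
      = (-1:R)^(j:ℕ) * (x * ((-1)^(j:ℕ) * mnr g2 j.succAbove id)) := by
        rw [show (-1:R)^(j:ℕ) * (x * ((-1)^(j:ℕ) * mnr g2 j.succAbove id))
            = ((-1:R)^(j:ℕ) * (-1)^(j:ℕ)) * (x * mnr g2 j.succAbove id) by ring,
          ← pow_add, Even.neg_one_pow ⟨(j:ℕ), rfl⟩, one_mul]
    _ = 0 := h2

end Main

section Exact
variable (g2 : Matrix (Fin (m+1)) (Fin m) R) (g1 : Matrix (Fin 1) (Fin (m+1)) R)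

lemma prop_lemma (hker : ∀ v, g1.mulVec v = 0 → ∃ w, g2.mulVec w = v)
    (i j : Fin (m+1)) : g1 0 i * delta g2 j = g1 0 j * delta g2 i := by
  classical
  set sing : Fin (m+1) → Fin (m+1) → R := fun q p => if p = q then 1 else 0 with hsingdef
  have hsing : ∀ (f : Fin (m+1) → R) (q : Fin (m+1)), (∑ p, f p * sing q p) = f q := by
    intro f q
    simp [hsingdef, mul_ite]
  set v : Fin (m+1) → R := fun p => g1 0 j * sing i p - g1 0 i * sing j p with hv
  have hv0 : g1.mulVec v = 0 := by
    funext z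
    have hz : z = 0 := Subsingleton.elim z 0
    subst hz
    show ∑ p, g1 0 p * v p = 0
    have hterm : ∀ p, g1 0 p * v p
        = g1 0 j * (g1 0 p * sing i p) - g1 0 i * (g1 0 p * sing j p) := by
      intro p; rw [hv]; ring
    rw [Finset.sum_congr rfl (fun p _ => hterm p), Finset.sum_sub_distrib,
      ← Finset.mul_sum, ← Finset.mul_sum, hsing (fun p => g1 0 p) i,
      hsing (fun p => g1 0 p) j]
    ring
  obtain ⟨w, hw⟩ := hker v hv0
  have h0 : ∑ p, delta g2 p * v p = 0 := by
    rw [← hw]; exact delta_dot_mulVec g2 w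
  have hexp : ∑ p, delta g2 p * v p = g1 0 j * delta g2 i - g1 0 i * delta g2 j := by
    have hterm : ∀ p, delta g2 p * v p
        = g1 0 j * (delta g2 p * sing i p) - g1 0 i * (delta g2 p * sing j p) := by
      intro p; rw [hv]; ring
    rw [Finset.sum_congr rfl (fun p _ => hterm p), Finset.sum_sub_distrib,
      ← Finset.mul_sum, ← Finset.mul_sum, hsing (fun p => delta g2 p) i,
      hsing (fun p => delta g2 p) j]
  rw [hexp] at h0
  linear_combination -h0

lemma exists_factor (hinj : Function.Injective g2.mulVec)
    (hker : ∀ v, g1.mulVec v = 0 → ∃ w, g2.mulVec w = v)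
    (horth : ∀ w, g1.mulVec (g2.mulVec w) = 0) :
    ∃ β : R, ∀ j, g1 0 j = β * delta g2 j := by
  classical
  have main : ∀ d k, k + d = m → ∀ (r : Fin k → Fin (m+1)) (c : Fin k → Fin m),
      ∃ β : R, ∀ j, β * delta g2 j = g1 0 j * mnr g2 r c := by
    intro d
    induction d with
    | zero =>
      intro k hk r c
      obtain rfl : k = m := by omega
      rcases mnr_top_structure g2 r c with h0 | ⟨i, e, _, heq⟩
      · exact ⟨0, fun j => by rw [h0, zero_mul, mul_zero]⟩
      · refine ⟨e * ((-1)^(i:ℕ) * g1 0 i), fun j => ?_⟩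
        have hp := prop_lemma g2 g1 hker i j
        have hsq : (-1:R)^(i:ℕ) * (-1)^(i:ℕ) = 1 := by
          rw [← pow_add]; exact Even.neg_one_pow ⟨(i:ℕ), rfl⟩
        calc e * ((-1)^(i:ℕ) * g1 0 i) * delta g2 j
            = e * (-1)^(i:ℕ) * (g1 0 i * delta g2 j) := by ring
          _ = e * (-1)^(i:ℕ) * (g1 0 j * delta g2 i) := by rw [hp]
          _ = g1 0 j * (e * ((-1)^(i:ℕ) * delta g2 i)) := by ring
          _ = g1 0 j * (e * mnr g2 i.succAbove id) := by
              rw [delta, show (-1:R)^(i:ℕ) * ((-1)^(i:ℕ) * mnr g2 i.succAbove id)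
                = ((-1:R)^(i:ℕ) * (-1)^(i:ℕ)) * mnr g2 i.succAbove id by ring, hsq, one_mul]
          _ = g1 0 j * mnr g2 r c := by rw [← heq]
    | succ d ih =>
      intro k hk r c
      obtain ⟨cs, hcs⟩ : ∃ cs : Fin m, ∀ p, c p ≠ cs := by
        by_contra hcon
        push_neg at hcon
        have hsurj : Function.Surjective c := fun b => by
          obtain ⟨p, hp⟩ := hcon b; exact ⟨p, hp⟩
        have := Fintype.card_le_of_surjective c hsurj
        simp [Fintype.card_fin] at this
        omega
      set cc : Fin (k+1) → Fin m := Fin.cons cs c with hcc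
      have hβs := fun i : Fin (m+1) => ih (k+1) (by omega) (Fin.cons i r) cc
      choose βs hβs using hβs
      -- the candidate kernel vector
      have hxz : (∑ i, g1 0 i * βs i) = 0 := by
        apply mccoy_delta g2 hinj
        intro j
        rw [Finset.sum_mul]
        have : ∀ i, g1 0 i * βs i * delta g2 j
            = g1 0 j * (g1 0 i * (g2.mulVec (vecRC g2 r cc)) i) := by
          intro i
          rw [mulVec_vecRC]
          calc g1 0 i * βs i * delta g2 j = g1 0 i * (βs i * delta g2 j) := by ring
            _ = g1 0 i * (g1 0 j * mnr g2 (Fin.cons i r) cc) := by rw [hβs i j]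
            _ = g1 0 j * (g1 0 i * (fun i' => mnr g2 (Fin.cons i' r) cc) i) := by ring
        rw [Finset.sum_congr rfl (fun i _ => this i), ← Finset.mul_sum]
        have : (∑ i, g1 0 i * (g2.mulVec (vecRC g2 r cc)) i)
            = g1.mulVec (g2.mulVec (vecRC g2 r cc)) 0 := rfl
        rw [this, horth (vecRC g2 r cc)]
        simp
      have hV : g1.mulVec βs = 0 := by
        funext z
        have hz : z = 0 := Subsingleton.elim z 0
        subst hz
        show ∑ i, g1 0 i * βs i = 0
        exact hxz
      obtain ⟨W, hW⟩ := hker βs hV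
      refine ⟨W cs, fun j => ?_⟩
      have hkey : delta g2 j • W = g1 0 j • vecRC g2 r cc := by
        apply hinj
        rw [Matrix.mulVec_smul, Matrix.mulVec_smul, hW, mulVec_vecRC]
        funext i
        rw [Pi.smul_apply, Pi.smul_apply, smul_eq_mul, smul_eq_mul]
        show delta g2 j * βs i = g1 0 j * mnr g2 (Fin.cons i r) cc
        rw [mul_comm, hβs i j]
      have := congrFun hkey cs
      rw [Pi.smul_apply, Pi.smul_apply, smul_eq_mul, smul_eq_mul,
        vecRC_eval_new g2 r c cs hcs] at this
      rw [mul_comm] at this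
      exact this
  obtain ⟨β, hβ⟩ := main m 0 (by omega) Fin.elim0 Fin.elim0
  refine ⟨β, fun j => ?_⟩
  have := hβ j
  rw [mnr, Matrix.det_fin_zero, mul_one] at this
  exact this.symm

/-- the scalar in the Hilbert-Burch factorization, in the sign convention of `HBd1`. -/
lemma exists_unique_alpha (hinj : Function.Injective g2.mulVec)
    (hker : ∀ v, g1.mulVec v = 0 → ∃ w, g2.mulVec w = v)
    (horth : ∀ w, g1.mulVec (g2.mulVec w) = 0) :
    ∃! α : R, ∀ j : Fin (m+1),
      g1 0 j = (-1)^((j:ℕ)+1) * α * mnr g2 j.succAbove id := by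
  obtain ⟨β, hβ⟩ := exists_factor g2 g1 hinj hker horth
  refine ⟨-β, fun j => ?_, fun α' hα' => ?_⟩
  · rw [hβ j, delta]
    ring
  · -- uniqueness
    have h : ∀ j : Fin (m+1), (α' - (-β)) * mnr g2 j.succAbove id = 0 := by
      intro j
      have h1 := hα' j
      have h2 : g1 0 j = (-1:R)^((j:ℕ)+1) * (-β) * mnr g2 j.succAbove id := by
        rw [hβ j, delta]; ring
      have h3 : (-1:R)^((j:ℕ)+1) * ((α' - (-β)) * mnr g2 j.succAbove id) = 0 := by
        rw [show (-1:R)^((j:ℕ)+1) * ((α' - (-β)) * mnr g2 j.succAbove id)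
          = (-1:R)^((j:ℕ)+1) * α' * mnr g2 j.succAbove id
            - (-1:R)^((j:ℕ)+1) * (-β) * mnr g2 j.succAbove id by ring, ← h1, ← h2, sub_self]
      have hsq : (-1:R)^((j:ℕ)+1) * (-1)^((j:ℕ)+1) = 1 := by
        rw [← pow_add]; exact Even.neg_one_pow ⟨(j:ℕ)+1, rfl⟩
      calc (α' - (-β)) * mnr g2 j.succAbove id
          = (-1:R)^((j:ℕ)+1) * ((-1:R)^((j:ℕ)+1) * ((α' - (-β)) * mnr g2 j.succAbove id)) := by
            rw [show (-1:R)^((j:ℕ)+1) * ((-1:R)^((j:ℕ)+1) * ((α' - (-β)) * mnr g2 j.succAbove id))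
              = ((-1:R)^((j:ℕ)+1) * (-1:R)^((j:ℕ)+1)) * ((α' - (-β)) * mnr g2 j.succAbove id) by ring,
              hsq, one_mul]
        _ = 0 := by rw [h3, mul_zero]
    have h4 : α' - (-β) = 0 := mccoy g2 hinj _ h
    linear_combination h4

end Exact

end HBaux

lemma delRow_eq_succAbove {m : ℕ} (j : Fin (m+1)) :
    (delRow j : Fin (m+1-1) → Fin (m+1)) = j.succAbove := by
  funext i
  simp only [delRow, Fin.succAbove]
  by_cases h : (i : ℕ) < (j : ℕ)
  · rw [dif_pos h, if_pos (by rwa [Fin.lt_def, Fin.coe_castSucc])]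
    apply Fin.ext
    simp
  · rw [dif_neg h, if_neg (by rwa [Fin.lt_def, Fin.coe_castSucc])]
    apply Fin.ext
    simp

theorem hilbert_burch_universal_pair.{u} (n : ℕ) (hn : 2 ≤ n) :
    -- (1) F^univ is a complex:
    HBd1 n * HBd2 n = 0 ∧
    -- (2) universality: for every commutative ℂ-algebra R and every acyclic complex
    -- 0 → R^{n-1} → R^n → R there is a unique ℂ-algebra map specializing F^univ to it
    ∀ (R : Type u) (_ : CommRing R) (_ : Algebra ℂ R)
      (g2 : Matrix (Fin n) (Fin (n - 1)) R) (g1 : Matrix (Fin 1) (Fin n) R),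
      LinearMap.ker g2.mulVecLin = ⊥ →
      LinearMap.ker g1.mulVecLin = LinearMap.range g2.mulVecLin →
      ∃! φ : HBUnivRing n →ₐ[ℂ] R,
        (HBd1 n).map φ = g1 ∧ (HBd2 n).map φ = g2 := by
  obtain ⟨m, rfl⟩ : ∃ m, n = m + 1 := ⟨n - 1, by omega⟩
  constructor
  · -- Part (1): the complex property
    ext z l
    rw [Matrix.mul_apply]
    have hterm : ∀ j, HBd1 (m+1) z j * HBd2 (m+1) j l
        = (-(MvPolynomial.X (Sum.inr ()) : HBUnivRing (m+1)))
            * (HBaux.delta (HBd2 (m+1)) j * HBd2 (m+1) j l) := by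
      intro j
      have hd : HBaux.delta (HBd2 (m+1)) j
          = (-1 : HBUnivRing (m+1))^(j:ℕ) * ((HBd2 (m+1)).submatrix (delRow j) id).det := by
        rw [delRow_eq_succAbove]
        rfl
      rw [hd]
      simp only [HBd1]
      ring
    rw [Finset.sum_congr rfl (fun j _ => hterm j), ← Finset.mul_sum,
      HBaux.delta_g2 (HBd2 (m+1)) l, mul_zero]
    rfl
  · -- Part (2): universality
    intro R _ _ g2 g1 hinj hexact
    have hinj' : Function.Injective g2.mulVec := by
      intro a b hab
      have := LinearMap.ker_eq_bot.mp hinj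
      apply this
      rw [Matrix.mulVecLin_apply, Matrix.mulVecLin_apply]
      exact hab
    have hker : ∀ v, g1.mulVec v = 0 → ∃ w, g2.mulVec w = v := by
      intro v hv
      have hv' : v ∈ LinearMap.ker g1.mulVecLin := by
        rw [LinearMap.mem_ker, Matrix.mulVecLin_apply]
        exact hv
      rw [hexact] at hv'
      obtain ⟨w, hw⟩ := hv'
      exact ⟨w, by rw [← Matrix.mulVecLin_apply]; exact hw⟩
    have horth : ∀ w, g1.mulVec (g2.mulVec w) = 0 := by
      intro w
      have hmem : g2.mulVec w ∈ LinearMap.range g2.mulVecLin :=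
        ⟨w, by rw [Matrix.mulVecLin_apply]⟩
      rw [← hexact] at hmem
      rw [LinearMap.mem_ker, Matrix.mulVecLin_apply] at hmem
      exact hmem
    obtain ⟨α, hα, hαuniq⟩ := HBaux.exists_unique_alpha g2 g1 hinj' hker horth
    set f : ((Fin (m+1) × Fin m) ⊕ Unit) → R :=
      Sum.elim (fun pq => g2 pq.1 pq.2) (fun _ => α) with hf
    set φ : HBUnivRing (m+1) →ₐ[ℂ] R := MvPolynomial.aeval f with hφ
    have hφX : ∀ i j, φ (MvPolynomial.X (Sum.inl (i, j))) = g2 i j := by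
      intro i j
      rw [hφ, MvPolynomial.aeval_X, hf]
      rfl
    have hφa : φ (MvPolynomial.X (Sum.inr ())) = α := by
      rw [hφ, MvPolynomial.aeval_X, hf]
      rfl
    have hφ2 : (HBd2 (m+1)).map φ = g2 := by
      ext i j
      rw [Matrix.map_apply]
      exact hφX i j
    have hdetmap : ∀ (ψ : HBUnivRing (m+1) →ₐ[ℂ] R), (HBd2 (m+1)).map ψ = g2 →
        ∀ j : Fin (m+1), ψ (((HBd2 (m+1)).submatrix (delRow j) id).det)
          = HBaux.mnr g2 (Fin.succAbove j) id := by
      intro ψ hψ j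
      rw [show ψ (((HBd2 (m+1)).submatrix (delRow j) id).det)
          = (ψ.toRingHom) (((HBd2 (m+1)).submatrix (delRow j) id).det) from rfl,
        RingHom.map_det]
      rw [HBaux.mnr]
      congr 1
      ext p q
      rw [RingHom.mapMatrix_apply, Matrix.map_apply, Matrix.submatrix_apply,
        Matrix.submatrix_apply, delRow_eq_succAbove]
      show ψ ((HBd2 (m+1)) (j.succAbove p) q) = g2 (j.succAbove p) q
      rw [← hψ, Matrix.map_apply]
    have hφ1 : (HBd1 (m+1)).map φ = g1 := by
      ext z j
      have hz : z = 0 := Subsingleton.elim z 0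
      subst hz
      rw [Matrix.map_apply, HBd1]
      show φ ((-1) ^ ((j:ℕ) + 1) * MvPolynomial.X (Sum.inr ())
        * ((HBd2 (m+1)).submatrix (delRow j) id).det) = g1 0 j
      rw [_root_.map_mul, _root_.map_mul, map_pow, _root_.map_neg, _root_.map_one, hφa, hdetmap φ hφ2 j, hα j]
    refine ⟨φ, ⟨hφ1, hφ2⟩, ?_⟩
    rintro ψ ⟨hψ1, hψ2⟩
    apply MvPolynomial.algHom_ext
    rintro (⟨i, j⟩ | ⟨⟩)
    · rw [hφX i j, ← hψ2, Matrix.map_apply]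
      rfl
    · rw [hφa]
      apply hαuniq
      intro j
      have := congrFun (congrFun hψ1 0) j
      rw [Matrix.map_apply, HBd1] at this
      rw [← this]
      show ψ ((-1) ^ ((j:ℕ) + 1) * MvPolynomial.X (Sum.inr ())
        * ((HBd2 (m+1)).submatrix (delRow j) id).det)
        = (-1) ^ ((j:ℕ) + 1) * ψ (MvPolynomial.X (Sum.inr ())) * HBaux.mnr g2 (Fin.succAbove j) id
      rw [_root_.map_mul, _root_.map_mul, map_pow, _root_.map_neg, _root_.map_one, hdetmap ψ hψ2 j]
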